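/- arXiv:2103.12875 — 3 statements merged into one kernel-verified Lean document; each statement's English description precedes it below -/
import Mathlib

section
/- Suppose a Dyck vector v starts with 0,0,1,2 and ends with a positive symbol. Then [v] is a NU₁-initial object, NU₁([v]) is defined and is a NU₁-final object, and mind(NU₁([v])) = mind([v]) + 1 = len(v) + 1. -/
/-- dinv contribution of an entry coming from extended negative positions. -/
def negContrib (x : ℤ) : ℕ := (if x ≤ -1 then 1 else 0) + (if x ≤ -2 then 1 else 0)

/-- The diagonal inversion statistic of a quasi-Dyck vector, with the
convention `v_k = k - 1` for `k ≤ 0`. -/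
def dinv (v : List ℤ) : ℕ :=
  (Finset.univ.filter (fun p : Fin v.length × Fin v.length =>
      (p.1 : ℕ) < (p.2 : ℕ) ∧ (v.get p.1 - v.get p.2 = 0 ∨ v.get p.1 - v.get p.2 = 1))).card
  + (v.map negContrib).sum

def area (v : List ℤ) : ℤ := v.sum

def defc (v : List ℤ) : ℤ := (v.length.choose 2 : ℤ) - area v - (dinv v : ℤ)

/-- Quasi-Dyck vector: nonempty, starts with 0, consecutive increases ≤ 1. -/
def IsQDV (v : List ℤ) : Prop :=
  v.head? = some 0 ∧ ∀ i : ℕ, i + 1 < v.length → v.getD (i + 1) 0 ≤ v.getD i 0 + 1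

def IsDyck (v : List ℤ) : Prop := IsQDV v ∧ ∀ x ∈ v, 0 ≤ x

def stepRel (v w : List ℤ) : Prop := w = 0 :: v.map (· + 1)

def dyckEquiv : List ℤ → List ℤ → Prop := Relation.EqvGen stepRel

def dyckSetoid : Setoid (List ℤ) := Relation.EqvGen.setoid stepRel

abbrev DyckClass := Quotient dyckSetoid

def cls (v : List ℤ) : DyckClass := Quotient.mk dyckSetoid v

/-- Reduced Dyck vector: a Dyck vector that is not `0 z⁺` for a Dyck vector `z`. -/
def IsReducedDV (v : List ℤ) : Prop :=
  IsDyck v ∧ ¬ ∃ z : List ℤ, IsDyck z ∧ v = 0 :: z.map (· + 1)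

/-- The leader of a QDV: the largest `d` such that `v` starts with `0,1,...,d`. -/
def leader (v : List ℤ) : ℕ :=
  Nat.findGreatest (fun d => ∀ i, i ≤ d → v.getD i 0 = (i : ℤ)) (v.length - 1)

/-- Delete the leader symbol and append `leader - 1`. -/
def nuStep (v : List ℤ) : List ℤ :=
  v.take (leader v) ++ v.drop (leader v + 1) ++ [(leader v : ℤ) - 1]

def nuApplies (v : List ℤ) : Prop :=
  IsQDV v ∧ 2 ≤ v.length ∧ 0 ≤ v.getD 1 0 ∧ (leader v : ℤ) ≤ v.getLastD 0 + 2

/-- The map NU₁ on Dyck classes, as a relation. -/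
def nuClassRel (c c' : DyckClass) : Prop :=
  ∃ v, nuApplies v ∧ c = cls v ∧ c' = cls (nuStep v)

def stepOk (A : List ℤ) : Prop := ∀ i : ℕ, i + 1 < A.length → A.getD (i + 1) 0 ≤ A.getD i 0 + 1

def okA (A : List ℤ) : Prop :=
  A = [] ∨ ((∀ x ∈ A, x ≤ 2) ∧ 0 ≤ A.getLastD 0 ∧ stepOk A)

def okB (B : List ℤ) : Prop :=
  B = [] ∨ ((∀ x ∈ B, x ≤ 2) ∧ B.headD 0 ≤ 1 ∧ -1 ≤ B.getLastD 0 ∧ stepOk B)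

/-- The map NU₂ on Dyck classes, as a relation. -/
def nu2ClassRel (c c' : DyckClass) : Prop :=
  (∃ (h : ℕ) (A : List ℤ), 2 ≤ h ∧ okA A ∧
      c = cls ([0, 1] ++ List.replicate h (2:ℤ) ++ A ++ List.replicate (h - 1) (-1)) ∧
      c' = cls (List.replicate h (0:ℤ) ++ [1] ++ A ++ List.replicate h 1)) ∨
  (∃ (k : ℕ) (B : List ℤ), 1 ≤ k ∧ okB B ∧
      c = cls ([0, 1] ++ List.replicate k (2:ℤ) ++ B ++ List.replicate k (-1)) ∧
      c' = cls (List.replicate (k + 1) (0:ℤ) ++ B ++ [0] ++ List.replicate k 1))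

/-- The extended next-up map NU = NU₁ ∪ NU₂, as a relation on Dyck classes. -/
def nuRel (c c' : DyckClass) : Prop := nuClassRel c c' ∨ nu2ClassRel c c'

/-- An integer partition, given by its weakly decreasing list of positive parts. -/
def IsPartitionList (l : List ℕ) : Prop := l.Pairwise (· ≥ ·) ∧ ∀ x ∈ l, 0 < x

/-- `phi l n` = the QDV `(0 - λ_n, 1 - λ_{n-1}, ..., (n-1) - λ_1)`. -/
def phi (l : List ℕ) (n : ℕ) : List ℤ :=
  List.ofFn (fun i : Fin n => (i : ℤ) - (l.getD (n - 1 - (i : ℕ)) 0 : ℤ))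

def nuOne (g : List ℕ) : List ℕ :=
  (g.length + 1) :: (g.map (· - 1)).filter (fun x => 0 < x)

def ndOne (g : List ℕ) : List ℕ :=
  g.tail.map (· + 1) ++ List.replicate (g.headD 0 - g.length) 1

/-- dinv of a partition: number of cells with arm - leg ∈ {0,1}. -/
def pdinv (l : List ℕ) : ℕ :=
  (Finset.univ.filter (fun c : Fin l.length × Fin (l.headD 0) =>
    (c.2 : ℕ) < l.get c.1 ∧
      (l.get c.1 - 1 - (c.2 : ℕ) =
          (Finset.univ.filter (fun i' : Fin l.length =>
            (c.1 : ℕ) < (i' : ℕ) ∧ (c.2 : ℕ) < l.get i')).card ∨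
        l.get c.1 - 1 - (c.2 : ℕ) =
          (Finset.univ.filter (fun i' : Fin l.length =>
            (c.1 : ℕ) < (i' : ℕ) ∧ (c.2 : ℕ) < l.get i')).card + 1))).card

/-- `bWord [n_1, ..., n_r]` = `0 1^{n_1} 0 1^{n_2} ⋯ 0 1^{n_r}`. -/
def bWord (ns : List ℕ) : List ℤ :=
  (ns.map (fun m => (0:ℤ) :: List.replicate m 1)).flatten

/-- `msize [n_1, ..., n_r] = Σ i·n_i`, the size of the partition `(r^{n_r},...,1^{n_1})`. -/
def msize (ns : List ℕ) : ℕ :=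
  (List.zipWith (fun m i => m * i) ns (List.range' 1 ns.length)).sum

/-- The reduced Dyck vector `0 B_μ` of the tail initiator of a partition. -/
def tiVec (l : List ℕ) : List ℤ :=
  (0:ℤ) :: ((List.range' 1 (l.headD 0)).map
    (fun i => (0:ℤ) :: List.replicate (l.count i) (1:ℤ))).flatten

/-- `c` is the second-order tail initiator of the partition `l`: obtained from
`[0 B_μ]` by iterating the extended next-down map as long as possible. -/
def IsTI2 (l : List ℕ) (c : DyckClass) : Prop :=
  Relation.ReflTransGen (fun x y => nuRel y x) (cls (tiVec l)) c ∧ ∀ d, ¬ nuRel d c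

/-- `m` is the minimum triangle height of the Dyck class `c`. -/
def mindIs (c : DyckClass) (m : ℕ) : Prop :=
  ∃ v, IsReducedDV v ∧ c = cls v ∧ v.length = m

/-- Flagpole partition: `|μ| + 8 ≤ 2 mind(TI₂(μ))`. -/
def IsFlagpole (l : List ℕ) : Prop :=
  ∃ c m, IsTI2 l c ∧ mindIs c m ∧ l.sum + 8 ≤ 2 * m

/-- The Dyck vector `v(λ,a,ε) = 0 0 1 2^{a-ε} B_λ⁺ 1^ε`. -/
def vLam (ns : List ℕ) (a ε : ℕ) : List ℤ :=
  [0, 0, 1] ++ List.replicate (a - ε) (2:ℤ) ++ (bWord ns).map (· + 1) ++ List.replicate ε 1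

/-
For a representative starting with `0`, the gap `v_n - leader v` is an invariant of the Dyck
class. Indeed, the offsets `v_i - i` change under `v ↦ 0 v⁺` only by a new leading zero; the
leader is one less than the number of leading zero offsets, and the last offset is `v_n - (n - 1)`,
so the gap is read off the offsets with their leading zeros stripped. An image `nuStep w` ends in
`leader w - 1` and still starts with `0, …, leader w - 1`, so its gap is `≤ 0`, while a
representative to which NU₁ applies has gap `≥ -2`. For `v = 0 0 1 2 …` the gap is `v_n > 0`,
and `nuStep v = 0 1 2 … (-1)` has gap `≤ -3`. Finally `0 (nuStep v)⁺` is a Dyck vector of length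
`len v + 1`, reduced because it has a zero after its head.
-/

open List

def offsets (v : List ℤ) : List ℤ := v.mapIdx fun i x => x - i

def coreOffsets (v : List ℤ) : List ℤ := (offsets v).dropWhile (· == 0)

lemma offsets_cons_map_add_one (v : List ℤ) :
    offsets (0 :: v.map (· + 1)) = 0 :: offsets v := by
  simp only [offsets, mapIdx_cons, Nat.cast_zero, sub_zero, cons.injEq, true_and]
  apply ext_getElem <;> simp

lemma coreOffsets_eq_of_dyckEquiv {u w : List ℤ} (h : dyckEquiv u w) :
    coreOffsets u = coreOffsets w := by
  induction h with
  | rel x y hxy =>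
    rw [hxy, coreOffsets, coreOffsets, offsets_cons_map_add_one, dropWhile_cons_of_pos (by simp)]
  | refl => rfl
  | symm _ _ _ ih => exact ih.symm
  | trans _ _ _ _ _ ih₁ ih₂ => exact ih₁.trans ih₂

lemma getLastD_dropWhile_beq {α : Type*} [BEq α] [LawfulBEq α] (a : α) (l : List α) :
    (l.dropWhile (· == a)).getLastD a = l.getLastD a := by
  induction l with
  | nil => rfl
  | cons b l ih =>
    by_cases hb : b = a
    · subst hb
      rw [dropWhile_cons_of_pos (by simp), ih, getLastD_cons]
    · rw [dropWhile_cons_of_neg (by simpa using hb)]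

lemma getLastD_offsets {v : List ℤ} (hv : v ≠ []) :
    (offsets v).getLastD 0 = v.getLastD 0 - (v.length - 1 : ℕ) := by
  obtain ⟨a, ha⟩ := Option.isSome_iff_exists.1 (getLast?_isSome.2 hv)
  simp [offsets, getLastD_eq_getLast?, getLast?_mapIdx, ha]

lemma le_leader {v : List ℤ} {d : ℕ} (hd : d < v.length) (h : ∀ i ≤ d, v.getD i 0 = i) :
    d ≤ leader v :=
  Nat.le_findGreatest (by omega) h

lemma leader_eq_zero {v : List ℤ} (h : v.getD 1 0 ≠ 1) : leader v = 0 :=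
  Nat.findGreatest_eq_zero_iff.2 fun _ hk _ hP => h (hP 1 hk)

lemma getD_eq_of_le_leader {v : List ℤ} (hv : v.head? = some 0) {i : ℕ} (hi : i ≤ leader v) :
    v.getD i 0 = i := by
  refine Nat.findGreatest_spec (P := fun d => ∀ i ≤ d, v.getD i 0 = i) (Nat.zero_le _)
    (fun j hj => ?_) i hi
  obtain ⟨t, rfl⟩ := head?_eq_some_iff.1 hv
  simp [Nat.le_zero.1 hj]

lemma leader_lt_length {v : List ℤ} (hv : v ≠ []) : leader v < v.length :=
  (Nat.findGreatest_le _).trans_lt (by simpa [Nat.sub_lt_iff_lt_add, length_pos_iff])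

lemma leader_cons_eq_findIdx (t : List ℤ) :
    leader (0 :: t) = (t.mapIdx fun i x => x - ((i : ℤ) + 1)).findIdx (fun x => !(x == 0)) := by
  set o := t.mapIdx fun i x => x - ((i : ℤ) + 1)
  have ho : ∀ j (hj : j < t.length), o[j]'(by simpa [o]) = t[j] - (j + 1) := by simp [o]
  have hk : o.findIdx (fun x => !(x == 0)) ≤ t.length := by
    simpa [o] using findIdx_le_length (p := fun x : ℤ => !(x == 0)) (xs := o)
  refine Nat.findGreatest_eq_iff.2 ⟨by simpa using hk, fun _ i hi => ?_, fun n hlt hn hP => ?_⟩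
  · rcases i with _ | j
    · rfl
    · have hj : j < t.length := by omega
      have := not_of_lt_findIdx (p := fun x : ℤ => !(x == 0)) (xs := o) (i := j) (by omega)
      simp only [ho j hj, Bool.not_eq_false', beq_iff_eq] at this
      rw [getD_cons_succ, getD_eq_getElem _ _ hj]
      push_cast
      omega
  · set k := o.findIdx (fun x => !(x == 0))
    have hkt : k < t.length := by simp only [length_cons, add_tsub_cancel_right] at hn; omega
    have hne : o[k]'(by simpa [o] using hkt) ≠ 0 := by
      simpa using findIdx_getElem (w := show k < o.length by simpa [o] using hkt)
    have hP' := hP (k + 1) (by omega)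
    rw [getD_cons_succ, getD_eq_getElem _ _ hkt] at hP'
    rw [ho k hkt] at hne
    push_cast at hP'
    omega

lemma leader_add_length_coreOffsets (t : List ℤ) :
    leader (0 :: t) + (coreOffsets (0 :: t)).length = t.length := by
  have hk := findIdx_le_length (p := fun x : ℤ => !(x == 0))
    (xs := t.mapIdx fun i x => x - ((i : ℤ) + 1))
  rw [coreOffsets, offsets, mapIdx_cons, dropWhile_cons_of_pos (by simp),
    dropWhile_eq_drop_findIdx_not, length_drop, leader_cons_eq_findIdx]
  simp only [length_mapIdx, Nat.cast_add, Nat.cast_one] at hk ⊢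
  omega

/-- In the paper's terms, `[v]` is NU₁-initial iff `0 < leaderGap v` and NU₁-final iff
`leaderGap v < -2`. -/
def leaderGap (v : List ℤ) : ℤ := v.getLastD 0 - leader v

lemma leaderGap_cons_zero (t : List ℤ) :
    leaderGap (0 :: t) = (coreOffsets (0 :: t)).getLastD 0 + (coreOffsets (0 :: t)).length := by
  have hlast := getLastD_offsets (v := 0 :: t) (cons_ne_nil _ _)
  have hlen := leader_add_length_coreOffsets t
  rw [show (coreOffsets (0 :: t)).getLastD 0 = _ from getLastD_dropWhile_beq 0 _, hlast]
  simp only [leaderGap, length_cons, add_tsub_cancel_right] at hlen ⊢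
  omega

lemma leaderGap_eq_of_dyckEquiv {u w : List ℤ} (hu : u.head? = some 0) (hw : w.head? = some 0)
    (h : dyckEquiv u w) : leaderGap u = leaderGap w := by
  obtain ⟨s, rfl⟩ := head?_eq_some_iff.1 hu
  obtain ⟨t, rfl⟩ := head?_eq_some_iff.1 hw
  rw [leaderGap_cons_zero, leaderGap_cons_zero, coreOffsets_eq_of_dyckEquiv h]

lemma length_nuStep {w : List ℤ} (hw : w ≠ []) : (nuStep w).length = w.length := by
  have := leader_lt_length hw
  simp only [nuStep, length_append, length_take, length_drop, length_singleton]
  omega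

lemma getLastD_nuStep (w : List ℤ) : (nuStep w).getLastD 0 = leader w - 1 := by
  simp [nuStep, getLastD_eq_getLast?]

lemma leaderGap_nuStep_nonpos {w : List ℤ} (hw : w.head? = some 0) :
    leaderGap (nuStep w) ≤ 0 := by
  have hne : w ≠ [] := by rintro rfl; simp at hw
  suffices (leader w : ℤ) - 1 ≤ leader (nuStep w) by
    rw [leaderGap, getLastD_nuStep]; omega
  rcases Nat.eq_zero_or_pos (leader w) with h0 | hpos
  · rw [h0]; omega
  have hL := leader_lt_length hne
  have := le_leader (v := nuStep w) (d := leader w - 1) (by rw [length_nuStep hne]; omega)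
    fun i hi => by
      rw [nuStep, append_assoc, getD_append _ _ _ _ (by simp; omega),
        getD_eq_getElem _ _ (by simp; omega), getElem_take,
        ← getD_eq_getElem _ _ (by omega), getD_eq_of_le_leader hw (by omega)]
  omega

lemma head?_nuStep {w : List ℤ} (hw : nuApplies w) : (nuStep w).head? = some 0 := by
  obtain ⟨⟨hw0, hstep⟩, hlen, hw1, -⟩ := hw
  obtain ⟨t, rfl⟩ := head?_eq_some_iff.1 hw0
  rcases Nat.eq_zero_or_pos (leader (0 :: t)) with h0 | hpos
  · obtain ⟨a, r, rfl⟩ := exists_cons_of_length_pos (by simp at hlen; omega : 0 < t.length)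
    have ha : a ≤ 1 := by simpa using hstep 0 (by simp)
    have ha' : a ≠ 1 := fun ha1 => by
      have := le_leader (v := 0 :: a :: r) (d := 1) (by simp) fun i hi => by
        interval_cases i <;> simp [ha1]
      omega
    simp only [getD_cons_succ, getD_cons_zero] at hw1
    simp [nuStep, h0]
    omega
  · obtain ⟨L, hL⟩ := Nat.exists_eq_add_of_lt hpos
    simp [nuStep, hL]

lemma not_nuClassRel_of_leaderGap_pos {v : List ℤ} (hv : v.head? = some 0)
    (hgap : 0 < leaderGap v) (c : DyckClass) : ¬ nuClassRel c (cls v) := by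
  rintro ⟨w, hw, -, hvw⟩
  have := leaderGap_eq_of_dyckEquiv hv (head?_nuStep hw) (Quotient.exact hvw)
  have := leaderGap_nuStep_nonpos hw.1.1
  omega

lemma not_nuClassRel_of_leaderGap_lt {v : List ℤ} (hv : v.head? = some 0)
    (hgap : leaderGap v < -2) (c : DyckClass) : ¬ nuClassRel (cls v) c := by
  rintro ⟨w, ⟨⟨hw0, -⟩, -, -, hwL⟩, hvw, -⟩
  rw [leaderGap_eq_of_dyckEquiv hv hw0 (Quotient.exact hvw), leaderGap] at hgap
  omega

lemma isQDV_iff {v : List ℤ} :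
    IsQDV v ↔ v.head? = some 0 ∧ v.IsChain (fun a b => b ≤ a + 1) := by
  rw [isChain_iff_getElem, IsQDV]
  refine and_congr_right fun _ => forall_congr' fun i => forall_congr' fun hi => ?_
  rw [getD_eq_getElem _ _ hi, getD_eq_getElem _ _ (by omega : i < v.length)]

lemma IsDyck.append_zero {v : List ℤ} (hv : IsDyck v) : IsDyck (v ++ [0]) := by
  obtain ⟨hq, hnn⟩ := hv
  obtain ⟨hhead, hchain⟩ := isQDV_iff.1 hq
  obtain ⟨t, rfl⟩ := head?_eq_some_iff.1 hhead
  refine ⟨isQDV_iff.2 ⟨rfl, hchain.append (isChain_singleton _) ?_⟩, ?_⟩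
  · intro x hx y hy
    simp only [head?_cons, Option.mem_def, Option.some.injEq] at hy
    have := hnn x (mem_of_getLast? hx)
    omega
  · intro x hx
    rcases mem_append.1 hx with hx | hx
    · exact hnn x hx
    · rw [mem_singleton.1 hx]

lemma IsDyck.cons_map_add_one {t : List ℤ} (hv : IsDyck (0 :: t)) (ht : t.head? = some 0) :
    IsDyck (0 :: t.map (· + 1)) := by
  obtain ⟨hq, hnn⟩ := hv
  obtain ⟨-, hchain⟩ := isQDV_iff.1 hq
  obtain ⟨s, rfl⟩ := head?_eq_some_iff.1 ht
  refine ⟨isQDV_iff.2 ⟨rfl, ?_⟩, ?_⟩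
  · have hmap : ((0 :: s).map (· + 1)).IsChain (fun a b => b ≤ a + 1) :=
      (isChain_map _).2 (by simpa using hchain.tail)
    exact hmap.cons (by simp)
  · intro x hx
    rcases mem_cons.1 hx with rfl | hx
    · rfl
    obtain ⟨a, ha, rfl⟩ := mem_map.1 hx
    have := hnn a (mem_cons_of_mem _ ha)
    omega

lemma isReducedDV_of_zero_mem_tail {v : List ℤ} (hv : IsDyck v) (h : 0 ∈ v.tail) :
    IsReducedDV v := by
  refine ⟨hv, ?_⟩
  rintro ⟨z, hz, rfl⟩
  obtain ⟨a, ha, ha0⟩ := mem_map.1 h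
  have := hz.2 a ha
  omega

theorem stmt15 (v : List ℤ) (hv : IsDyck v) (h4 : v.take 4 = [0, 0, 1, 2])
    (hlast : 0 < v.getLastD 0) :
    (∀ c : DyckClass, ¬ nuClassRel c (cls v)) ∧
    nuApplies v ∧
    (∀ c : DyckClass, ¬ nuClassRel (cls (nuStep v)) c) ∧
    IsReducedDV v ∧
    (∃ u, IsReducedDV u ∧ dyckEquiv u (nuStep v) ∧ u.length = v.length + 1) := by
  obtain ⟨t, rfl⟩ : ∃ t, v = 0 :: 0 :: 1 :: 2 :: t :=
    ⟨v.drop 4, by rw [← take_append_drop 4 v, h4]; rfl⟩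
  have hlead : leader (0 :: 0 :: 1 :: 2 :: t) = 0 := leader_eq_zero (by simp)
  have hnu : nuStep (0 :: 0 :: 1 :: 2 :: t) = (0 :: 1 :: 2 :: t) ++ [-1] := by
    simp [nuStep, hlead]
  have hlead_nu : 2 ≤ leader (nuStep (0 :: 0 :: 1 :: 2 :: t)) :=
    le_leader (by simp [hnu]) fun i hi => by interval_cases i <;> simp [hnu]
  refine ⟨not_nuClassRel_of_leaderGap_pos rfl (by simpa [leaderGap, hlead] using hlast),
    ⟨hv.1, by simp, by simp, by rw [hlead]; omega⟩,
    not_nuClassRel_of_leaderGap_lt (by simp [hnu]) ?_,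
    isReducedDV_of_zero_mem_tail hv (by simp),
    0 :: (nuStep _).map (· + 1), ?_, .symm _ _ (.rel _ _ rfl), by simp [length_nuStep]⟩
  · rw [leaderGap, getLastD_nuStep, hlead]
    omega
  · have hu : 0 :: (nuStep (0 :: 0 :: 1 :: 2 :: t)).map (· + 1)
        = (0 :: (0 :: 1 :: 2 :: t).map (· + 1)) ++ [0] := by simp [hnu]
    rw [hu]
    exact isReducedDV_of_zero_mem_tail ((hv.cons_map_add_one rfl).append_zero) (by simp)
end

section
/- The map NU₂ defined by the two rules (a) NU₂([0 1 2^h A (-1)^{h-1}]) = [0 0^{h-1} 1 A 1^h] for h ≥ 2 and lists A with all entries ≤ 2, last entry ≥ 0 (or A empty), and consecutive increases at most 1, and (b) NU₂([0 1 2^k B (-1)^k]) = [0 0^k B 0 1^k] for k ≥ 1 and lists B with all entries ≤ 2, first entry ≤ 1, last entry ≥ -1 (or B empty), and consecutive increases at most 1, satisfies: for any class γ in its domain, defc(NU₂(γ)) = defc(γ) and dinv(NU₂(γ)) = dinv(γ) + 1. -/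
/-!
Cut both words of a rule into the middle word (`A` or `B`) and constant blocks. The dinv of a
concatenation is the dinv of its blocks plus the dinv pairs between an earlier and a later block.
The pairs with an entry of the middle word are counted by `dinvPartners c` of it for `c = 0, 1, 2`,
with the same multiplicity on both sides: in rule (a), for instance, the `0^h` in front of `A`
in the image matches the `0` in front of `A` and the `(-1)^(h-1)` behind it in the preimage. What is
left are binomial coefficients from the constant blocks and `negContrib (-1) = 1` for every `-1`,
and these differ by exactly one. The length is the same and the area drops by one, so `defc`
is preserved.
-/

def dinvPartners (x : ℤ) (Y : List ℤ) : ℕ := Y.countP (fun y => x - y = 0 ∨ x - y = 1)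

def crossDinv (X Y : List ℤ) : ℕ := (X.map (dinvPartners · Y)).sum

@[simp]
theorem dinvPartners_cons (x y : ℤ) (Y : List ℤ) :
    dinvPartners x (y :: Y) = dinvPartners x Y + if x - y = 0 ∨ x - y = 1 then 1 else 0 := by
  simp [dinvPartners, List.countP_cons]

@[simp]
theorem dinvPartners_append (x : ℤ) (Y Z : List ℤ) :
    dinvPartners x (Y ++ Z) = dinvPartners x Y + dinvPartners x Z :=
  List.countP_append ..

@[simp]
theorem dinvPartners_replicate (x c : ℤ) (n : ℕ) :
    dinvPartners x (List.replicate n c) = if x - c = 0 ∨ x - c = 1 then n else 0 := by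
  simp [dinvPartners, List.countP_replicate]

theorem dinvPartners_eq_sum (x : ℤ) (Y : List ℤ) :
    dinvPartners x Y = ∑ i : Fin Y.length, if x - Y.get i = 0 ∨ x - Y.get i = 1 then 1 else 0 := by
  induction Y with
  | nil => rfl
  | cons y Y ih =>
    simp only [List.length_cons]
    rw [Fin.sum_univ_succ, dinvPartners_cons, ih]
    by_cases hxy : x - y = 0 ∨ x - y = 1 <;> simp [hxy, add_comm]

@[simp]
theorem dinv_nil : dinv [] = 0 := rfl

@[simp]
theorem dinv_cons (x : ℤ) (l : List ℤ) :
    dinv (x :: l) = dinv l + dinvPartners x l + negContrib x := by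
  simp only [dinv, Finset.card_filter, Fintype.sum_prod_type, List.length_cons, Fin.sum_univ_succ,
    Fin.val_zero, Fin.val_succ, List.map_cons, List.sum_cons, dinvPartners_eq_sum]
  simp only [Fin.val_succ, lt_self_iff_false, List.get_eq_getElem, Fin.coe_ofNat_eq_mod, Nat.zero_mod,
    List.getElem_cons_zero, sub_self, zero_ne_one, or_false, and_true, ↓reduceIte,
    lt_add_iff_pos_left, Order.lt_add_one_iff, zero_le, List.getElem_cons_succ, true_and,
    Finset.sum_boole, Nat.cast_id, zero_add, not_lt_zero, false_and, Order.add_one_le_iff,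
    Fin.val_fin_lt]
  ring

theorem crossDinv_cons_left (x : ℤ) (X Y : List ℤ) :
    crossDinv (x :: X) Y = dinvPartners x Y + crossDinv X Y := by
  simp [crossDinv]

@[simp]
theorem crossDinv_replicate_left (c : ℤ) (n : ℕ) (Y : List ℤ) :
    crossDinv (List.replicate n c) Y = n * dinvPartners c Y := by
  simp [crossDinv]

@[simp]
theorem crossDinv_cons_right (X : List ℤ) (c : ℤ) (Y : List ℤ) :
    crossDinv X (c :: Y) = crossDinv X Y + dinvPartners (c + 1) X := by
  induction X with
  | nil => rfl
  | cons x X ih =>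
    have hswap : (x - c = 0 ∨ x - c = 1) ↔ (c + 1 - x = 0 ∨ c + 1 - x = 1) := by omega
    rw [crossDinv_cons_left, crossDinv_cons_left, ih, dinvPartners_cons, dinvPartners_cons]
    simp only [hswap]
    ring

@[simp]
theorem crossDinv_replicate_right (X : List ℤ) (c : ℤ) (n : ℕ) :
    crossDinv X (List.replicate n c) = n * dinvPartners (c + 1) X := by
  induction n with
  | zero => simp [crossDinv, dinvPartners]
  | succ n ih => rw [List.replicate_succ, crossDinv_cons_right, ih, add_one_mul]

theorem dinv_append (X Y : List ℤ) : dinv (X ++ Y) = dinv X + dinv Y + crossDinv X Y := by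
  induction X with
  | nil => simp [crossDinv]
  | cons x X ih =>
    simp only [List.cons_append, dinv_cons, ih, crossDinv_cons_left, dinvPartners_append]
    ring

@[simp]
theorem dinv_replicate (c : ℤ) (n : ℕ) :
    dinv (List.replicate n c) = n.choose 2 + n * negContrib c := by
  induction n with
  | zero => simp
  | succ n ih =>
    rw [List.replicate_succ, dinv_cons, ih, dinvPartners_replicate, Nat.choose_succ_succ']
    simp only [sub_self, zero_ne_one, or_false, ↓reduceIte, Nat.choose_one_right]
    ring

theorem dinv_nu2_rule_a (m : ℕ) (A : List ℤ) :
    dinv (List.replicate (m + 1) 0 ++ [1] ++ A ++ List.replicate (m + 1) 1)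
      = dinv ([0, 1] ++ List.replicate (m + 1) 2 ++ A ++ List.replicate m (-1)) + 1 := by
  simp [dinv_append, negContrib, Nat.choose_succ_succ']
  ring

theorem dinv_nu2_rule_b (k : ℕ) (B : List ℤ) :
    dinv (List.replicate (k + 1) 0 ++ B ++ [0] ++ List.replicate k 1)
      = dinv ([0, 1] ++ List.replicate k 2 ++ B ++ List.replicate k (-1)) + 1 := by
  simp [dinv_append, negContrib, Nat.choose_succ_succ']
  ring

theorem defc_eq_of_dinv_eq_succ {v w : List ℤ} (hlen : w.length = v.length)
    (harea : area v = area w + 1) (hdinv : dinv w = dinv v + 1) : defc w = defc v := by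
  simp only [defc, hlen, harea, hdinv]
  push_cast
  ring

theorem stmt16 :
    (∀ (h : ℕ) (A : List ℤ), 2 ≤ h → okA A →
      defc (List.replicate h (0:ℤ) ++ [1] ++ A ++ List.replicate h 1)
        = defc ([0, 1] ++ List.replicate h (2:ℤ) ++ A ++ List.replicate (h - 1) (-1)) ∧
      dinv (List.replicate h (0:ℤ) ++ [1] ++ A ++ List.replicate h 1)
        = dinv ([0, 1] ++ List.replicate h (2:ℤ) ++ A ++ List.replicate (h - 1) (-1)) + 1) ∧
    (∀ (k : ℕ) (B : List ℤ), 1 ≤ k → okB B →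
      defc (List.replicate (k + 1) (0:ℤ) ++ B ++ [0] ++ List.replicate k 1)
        = defc ([0, 1] ++ List.replicate k (2:ℤ) ++ B ++ List.replicate k (-1)) ∧
      dinv (List.replicate (k + 1) (0:ℤ) ++ B ++ [0] ++ List.replicate k 1)
        = dinv ([0, 1] ++ List.replicate k (2:ℤ) ++ B ++ List.replicate k (-1)) + 1) := by
  refine ⟨fun h A hh _ => ?_, fun k B _ _ => ?_⟩
  · obtain ⟨m, rfl⟩ : ∃ m, h = m + 1 := ⟨h - 1, by omega⟩
    have hdinv := dinv_nu2_rule_a m A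
    refine ⟨defc_eq_of_dinv_eq_succ ?_ ?_ hdinv, hdinv⟩
    · simp
      omega
    · simp [area]
      ring
  · have hdinv := dinv_nu2_rule_b k B
    refine ⟨defc_eq_of_dinv_eq_succ ?_ ?_ hdinv, hdinv⟩
    · simp
      omega
    · simp [area]
      ring
end

section
/- For the Dyck vectors v(λ,a,ε) = 0 0 1 2^{a-ε} B_λ⁺ 1^ε of length L = a + 3 + λ_1 + ℓ(λ): area(v(λ,a,ε)) = 2L - λ_1 - 5 - ε and dinv(v(λ,a,ε)) = C(L,2) - 3L - |λ| + λ_1 + 7 + ε. In particular dinv(v(λ,a,1)) = dinv(v(λ,a,0)) + 1, so the two vectors have dinv of opposite parity, and defc(v(λ,a,ε)) = L + |λ| - 2. -/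
def isDinvPair (x y : ℤ) : Bool := decide (x - y = 0 ∨ x - y = 1)

def dinvPairs : List ℤ → ℕ
  | [] => 0
  | x :: l => l.countP (isDinvPair x) + dinvPairs l

def dinvCross (u w : List ℤ) : ℕ := (u.map fun x => w.countP (isDinvPair x)).sum

lemma isDinvPair_iff (x y : ℤ) : isDinvPair x y ↔ y = x ∨ y = x - 1 := by
  simp only [isDinvPair, decide_eq_true_eq]; omega

lemma isDinvPair_add_one (x y : ℤ) : isDinvPair (x + 1) (y + 1) = isDinvPair x y := by
  simp only [isDinvPair, decide_eq_decide]; omega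

lemma countP_isDinvPair (l : List ℤ) (x : ℤ) :
    l.countP (isDinvPair x) = l.count x + l.count (x - 1) := by
  induction l with
  | nil => rfl
  | cons y l ih =>
    simp only [List.countP_cons, List.count_cons, ih, beq_iff_eq, isDinvPair_iff]
    split_ifs <;> omega

lemma countP_isDinvPair_left (l : List ℤ) (y : ℤ) :
    l.countP (fun x => isDinvPair x y) = l.count y + l.count (y + 1) := by
  induction l with
  | nil => rfl
  | cons x l ih =>
    simp only [List.countP_cons, List.count_cons, ih, beq_iff_eq, isDinvPair_iff]
    split_ifs <;> omega

lemma countP_eq_sum_fin {α : Type*} (p : α → Bool) (l : List α) :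
    l.countP p = ∑ k : Fin l.length, if p (l.get k) then 1 else 0 := by
  induction l with
  | nil => rfl
  | cons x l ih =>
    simp only [List.countP_cons, List.length_cons, Fin.sum_univ_succ, List.get_eq_getElem,
      Fin.val_zero, List.getElem_cons_zero, Fin.val_succ, List.getElem_cons_succ] at ih ⊢
    rw [ih, add_comm]
    rfl

lemma card_dinv_filter_eq_dinvPairs (v : List ℤ) :
    (Finset.univ.filter (fun p : Fin v.length × Fin v.length =>
      (p.1 : ℕ) < (p.2 : ℕ) ∧ (v.get p.1 - v.get p.2 = 0 ∨ v.get p.1 - v.get p.2 = 1))).card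
    = dinvPairs v := by
  rw [Finset.card_filter, Fintype.sum_prod_type]
  induction v with
  | nil => rfl
  | cons x l ih =>
    rw [dinvPairs, ← ih, countP_eq_sum_fin]
    simp only [List.length_cons, Fin.sum_univ_succ, List.get_eq_getElem, Fin.val_zero,
      Fin.val_succ, List.getElem_cons_zero, List.getElem_cons_succ, Nat.zero_lt_succ,
      Nat.succ_lt_succ_iff, Nat.not_lt_zero, false_and, if_false, true_and, isDinvPair,
      decide_eq_true_eq, zero_add]

lemma dinv_eq_dinvPairs {v : List ℤ} (hv : ∀ x ∈ v, 0 ≤ x) : dinv v = dinvPairs v := by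
  have hneg : (v.map negContrib).sum = 0 :=
    List.sum_eq_zero_iff.2 fun n hn => by
      obtain ⟨x, hx, rfl⟩ := List.mem_map.1 hn
      have := hv x hx
      simp only [negContrib]; split_ifs <;> omega
  rw [dinv, card_dinv_filter_eq_dinvPairs, hneg, add_zero]

lemma dinvCross_append_left (u₁ u₂ w : List ℤ) :
    dinvCross (u₁ ++ u₂) w = dinvCross u₁ w + dinvCross u₂ w := by
  simp [dinvCross]

lemma dinvPairs_append (u w : List ℤ) :
    dinvPairs (u ++ w) = dinvPairs u + dinvPairs w + dinvCross u w := by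
  induction u with
  | nil => simp [dinvPairs, dinvCross]
  | cons x u ih =>
    simp only [List.cons_append, dinvPairs, List.countP_append, ih, dinvCross, List.map_cons,
      List.sum_cons]
    ring

lemma dinvPairs_replicate (n : ℕ) (c : ℤ) : dinvPairs (List.replicate n c) = n.choose 2 := by
  induction n with
  | zero => rfl
  | succ n ih =>
    have hpred : (List.replicate n c).count (c - 1) = 0 :=
      List.count_eq_zero.2 fun h => by have := List.eq_of_mem_replicate h; omega
    rw [List.replicate_succ, dinvPairs, ih, countP_isDinvPair, List.count_replicate_self, hpred,
      Nat.choose_succ_succ', Nat.choose_one_right]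
    ring

lemma dinvPairs_map_add_one (l : List ℤ) : dinvPairs (l.map (· + 1)) = dinvPairs l := by
  induction l with
  | nil => rfl
  | cons x l ih =>
    simp only [List.map_cons, dinvPairs, ih, List.countP_map]
    congr 1
    exact List.countP_congr fun y _ => by simp [isDinvPair_add_one]

lemma dinvCross_replicate_left (n : ℕ) (c : ℤ) (w : List ℤ) :
    dinvCross (List.replicate n c) w = n * (w.count c + w.count (c - 1)) := by
  simp [dinvCross, countP_isDinvPair]

lemma dinvCross_replicate_right (u : List ℤ) (n : ℕ) (c : ℤ) :
    dinvCross u (List.replicate n c) = n * (u.count c + u.count (c + 1)) := by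
  rw [← countP_isDinvPair_left]
  induction u with
  | nil => rfl
  | cons x u ih =>
    simp only [dinvCross, List.map_cons, List.sum_cons, List.countP_cons,
      List.countP_replicate] at ih ⊢
    rw [ih]
    split_ifs <;> ring

lemma count_map_add_one (l : List ℤ) (c : ℤ) : (l.map (· + 1)).count c = l.count (c - 1) := by
  simpa using List.count_map_of_injective l (· + 1) (add_left_injective 1) (c - 1)

lemma bWord_cons (m : ℕ) (t : List ℕ) :
    bWord (m :: t) = ((0 : ℤ) :: List.replicate m 1) ++ bWord t := by
  simp [bWord]

lemma length_bWord (ns : List ℕ) : (bWord ns).length = ns.length + ns.sum := by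
  induction ns with
  | nil => rfl
  | cons m t ih =>
    simp only [bWord_cons, List.length_append, List.length_cons, List.length_replicate, ih,
      List.sum_cons]
    ring

lemma sum_bWord (ns : List ℕ) : (bWord ns).sum = ns.sum := by
  induction ns with
  | nil => rfl
  | cons m t ih => simp [bWord_cons, ih]

lemma mem_bWord {ns : List ℕ} {x : ℤ} (hx : x ∈ bWord ns) : x = 0 ∨ x = 1 := by
  simp only [bWord, List.mem_flatten, List.mem_map] at hx
  obtain ⟨_, ⟨m, -, rfl⟩, hx⟩ := hx
  simp only [List.mem_cons, List.mem_replicate] at hx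
  omega

lemma count_bWord_zero (ns : List ℕ) : (bWord ns).count 0 = ns.length := by
  induction ns with
  | nil => rfl
  | cons m t ih => simp [bWord_cons, ih, List.count_replicate]

lemma count_bWord_one (ns : List ℕ) : (bWord ns).count 1 = ns.sum := by
  induction ns with
  | nil => rfl
  | cons m t ih => simp [bWord_cons, ih]

lemma count_bWord_of_ne {c : ℤ} (h₀ : c ≠ 0) (h₁ : c ≠ 1) (ns : List ℕ) :
    (bWord ns).count c = 0 :=
  List.count_eq_zero.2 fun hc => by rcases mem_bWord hc with h | h <;> contradiction

lemma sum_zipWith_mul_range'_succ (t : List ℕ) (k : ℕ) :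
    (List.zipWith (· * ·) t (List.range' (k + 1) t.length)).sum
      = (List.zipWith (· * ·) t (List.range' k t.length)).sum + t.sum := by
  induction t generalizing k with
  | nil => rfl
  | cons m t ih =>
    simp only [List.length_cons, List.range'_succ, List.zipWith_cons_cons, List.sum_cons, ih]
    ring

lemma msize_cons (m : ℕ) (t : List ℕ) : msize (m :: t) = m + t.sum + msize t := by
  simp only [msize, List.length_cons, List.range'_succ, List.zipWith_cons_cons, List.sum_cons]
  rw [sum_zipWith_mul_range'_succ]
  ring

lemma dinvPairs_bWord (ns : List ℕ) :
    dinvPairs (bWord ns) + msize ns = (ns.length + ns.sum).choose 2 := by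
  induction ns with
  | nil => rfl
  | cons m t ih =>
    have hblock : dinvPairs ((0 : ℤ) :: List.replicate m 1) = m.choose 2 := by
      simp [dinvPairs, dinvPairs_replicate, isDinvPair]
    have hcross : dinvCross ((0 : ℤ) :: List.replicate m 1) (bWord t)
        = t.length + m * (t.length + t.sum) := by
      simp [dinvCross, countP_isDinvPair, count_bWord_zero, count_bWord_one, count_bWord_of_ne,
        add_comm]
    rw [bWord_cons, dinvPairs_append, hblock, hcross, msize_cons, List.length_cons,
      List.sum_cons]
    -- keeps `qify` from pushing the cast inside the list sum
    generalize t.sum = s at ih ⊢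
    qify [Nat.cast_choose_two] at ih ⊢
    linear_combination ih

lemma dinvPairs_vLam (ns : List ℕ) (k ε : ℕ) :
    dinvPairs (vLam ns (k + ε) ε) = 1 + k.choose 2 + dinvPairs (bWord ns) + ε.choose 2
      + ns.length + ε + k * (ns.length + ns.sum + ε) + (ns.length + ns.sum) * ε := by
  rw [vLam, Nat.add_sub_cancel]
  set W := (bWord ns).map (· + 1) with hW
  have hpairsW : dinvPairs W = dinvPairs (bWord ns) := dinvPairs_map_add_one _
  have hW₁ : W.count 1 = ns.length := by simp [hW, count_map_add_one, count_bWord_zero]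
  have hW₂ : W.count 2 = ns.sum := by simp [hW, count_map_add_one, count_bWord_one]
  have hWc : ∀ c : ℤ, c ≠ 1 → c ≠ 2 → W.count c = 0 := fun c h₁ h₂ => by
    rw [hW, count_map_add_one, count_bWord_of_ne] <;> omega
  have hhead : dinvPairs [0, 0, 1] = 1 := rfl
  have hhead2 : dinvCross [0, 0, 1] (List.replicate k 2) = 0 := by
    simp [dinvCross_replicate_right]
  have hheadW : dinvCross [0, 0, 1] W = ns.length := by
    simp [dinvCross, countP_isDinvPair, hW₁, hWc]
  have hhead1 : dinvCross [0, 0, 1] (List.replicate ε 1) = ε := by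
    simp [dinvCross_replicate_right]
  have h2W : dinvCross (List.replicate k 2) W = k * (ns.length + ns.sum) := by
    rw [dinvCross_replicate_left]
    simp [hW₁, hW₂, add_comm]
  have h21 : dinvCross (List.replicate k 2) (List.replicate ε 1) = k * ε := by
    simp [dinvCross_replicate_left, List.count_replicate]
  have hW1 : dinvCross W (List.replicate ε 1) = (ns.length + ns.sum) * ε := by
    rw [dinvCross_replicate_right, one_add_one_eq_two, hW₁, hW₂, mul_comm]
  simp only [dinvPairs_append, dinvCross_append_left, dinvPairs_replicate, hpairsW,
    hhead, hhead2, hheadW, hhead1, h2W, h21, hW1]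
  ring

section vLam

variable (ns : List ℕ) {a ε : ℕ}

lemma vLam_nonneg : ∀ x ∈ vLam ns a ε, 0 ≤ x := by
  have hB : ∀ y ∈ bWord ns, 0 ≤ y + 1 := fun y hy => by
    rcases mem_bWord hy with rfl | rfl <;> norm_num
  simp only [vLam, List.mem_append, List.mem_map, List.mem_replicate]
  rintro x (((hx | ⟨-, rfl⟩) | ⟨y, hy, rfl⟩) | ⟨-, rfl⟩)
  · fin_cases hx <;> norm_num
  · norm_num
  · exact hB y hy
  · norm_num

lemma length_vLam (h : ε ≤ a) : (vLam ns a ε).length = a + 3 + ns.length + ns.sum := by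
  simp only [vLam, List.length_append, List.length_cons, List.length_nil, List.length_replicate,
    List.length_map, length_bWord]
  omega

lemma area_vLam (h : ε ≤ a) :
    area (vLam ns a ε) = 2 * ((a + 3 + ns.length + ns.sum : ℕ) : ℤ) - ns.length - 5 - ε := by
  simp only [area, vLam, List.sum_append, List.sum_cons, List.sum_nil, List.sum_replicate,
    List.sum_map_add, List.map_id', List.map_const', sum_bWord, length_bWord, nsmul_eq_mul,
    Nat.cast_sub h]
  push_cast
  ring

lemma dinv_vLam (h : ε ≤ a) :
    (dinv (vLam ns a ε) : ℤ) = ((a + 3 + ns.length + ns.sum).choose 2 : ℤ)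
      - 3 * ((a + 3 + ns.length + ns.sum : ℕ) : ℤ) - msize ns + ns.length + 7 + ε := by
  obtain ⟨k, rfl⟩ : ∃ k, a = k + ε := ⟨a - ε, by omega⟩
  have hB := dinvPairs_bWord ns
  rw [dinv_eq_dinvPairs (vLam_nonneg ns), dinvPairs_vLam]
  generalize ns.sum = s at hB ⊢
  qify [Nat.cast_choose_two] at hB ⊢
  linear_combination hB

end vLam

theorem stmt19_general (ns : List ℕ) (a ε : ℕ)
    (ha : 2 ≤ a) (hε : ε ≤ 1) :
    (vLam ns a ε).length = a + 3 + ns.length + ns.sum ∧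
    area (vLam ns a ε)
      = 2 * ((a + 3 + ns.length + ns.sum : ℕ) : ℤ) - (ns.length : ℤ) - 5 - (ε : ℤ) ∧
    (dinv (vLam ns a ε) : ℤ)
      = ((a + 3 + ns.length + ns.sum).choose 2 : ℤ)
        - 3 * ((a + 3 + ns.length + ns.sum : ℕ) : ℤ) - (msize ns : ℤ)
        + (ns.length : ℤ) + 7 + (ε : ℤ) ∧
    dinv (vLam ns a 1) = dinv (vLam ns a 0) + 1 ∧
    defc (vLam ns a ε) = ((a + 3 + ns.length + ns.sum : ℕ) : ℤ) + (msize ns : ℤ) - 2 := by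
  have hεa : ε ≤ a := by omega
  have hdinv := dinv_vLam ns hεa
  refine ⟨length_vLam ns hεa, area_vLam ns hεa, hdinv, ?_, ?_⟩
  · have h₀ := dinv_vLam ns (Nat.zero_le a)
    have h₁ := dinv_vLam ns (by omega : 1 ≤ a)
    omega
  · rw [defc, length_vLam ns hεa, area_vLam ns hεa, hdinv]
    ring

theorem stmt19 (ns : List ℕ) (hns : ns = [] ∨ 0 < ns.getLastD 0) (a ε : ℕ)
    (ha : 2 ≤ a) (hε : ε ≤ 1) :
    (vLam ns a ε).length = a + 3 + ns.length + ns.sum ∧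
    area (vLam ns a ε)
      = 2 * ((a + 3 + ns.length + ns.sum : ℕ) : ℤ) - (ns.length : ℤ) - 5 - (ε : ℤ) ∧
    (dinv (vLam ns a ε) : ℤ)
      = ((a + 3 + ns.length + ns.sum).choose 2 : ℤ)
        - 3 * ((a + 3 + ns.length + ns.sum : ℕ) : ℤ) - (msize ns : ℤ)
        + (ns.length : ℤ) + 7 + (ε : ℤ) ∧
    dinv (vLam ns a 1) = dinv (vLam ns a 0) + 1 ∧
    defc (vLam ns a ε) = ((a + 3 + ns.length + ns.sum : ℕ) : ℤ) + (msize ns : ℤ) - 2 :=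
  stmt19_general ns a ε ha hε
end
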